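/- Let Γ be a countable group and μ a probability measure on Γ whose support generates Γ, with finite entropy H(μ), such that the associated random walk is transient. If the asymptotic entropy h is strictly positive, then the logarithmic volume growth in the Green metric satisfies v_G = limsup_{n→∞} ln(V_G(n))/n ≥ 1. -/

import Mathlib

open MeasureTheory ProbabilityTheory Filter
open scoped ENNReal

noncomputable section

variable {Γ Ω : Type*}

/-- Position at time `n` of the random walk started at `x` with i.i.d. increments
`X 0, X 1, …` : `Z_n = x * X_0 * X_1 * ⋯ * X_{n-1}` (ordered product). -/
def walk [Group Γ] (x : Γ) (X : ℕ → Ω → Γ) (n : ℕ) (ω : Ω) : Γ :=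
  x * ((List.range n).map fun k => X k ω).prod

/-- Hitting probability `F(x,y) = ℙ^x[∃ n ≥ 0, Z_n = y]`. -/
def hitProb [Group Γ] [MeasurableSpace Ω] (P : Measure Ω) (X : ℕ → Ω → Γ) (x y : Γ) : ℝ≥0∞ :=
  P {ω | ∃ n : ℕ, walk x X n ω = y}

/-- Green metric `d_G(x,y) = -ln F(x,y)`. -/
def greenDist [Group Γ] [MeasurableSpace Ω] (P : Measure Ω) (X : ℕ → Ω → Γ) (x y : Γ) : ℝ :=
  - Real.log (hitProb P X x y).toReal

/-- Green function `G(x,y) = Σ_{n≥0} ℙ^x[Z_n = y]`. -/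
def greenFn [Group Γ] [MeasurableSpace Ω] (P : Measure Ω) (X : ℕ → Ω → Γ) (x y : Γ) : ℝ≥0∞ :=
  ∑' n : ℕ, P {ω | walk x X n ω = y}

/-- Martin kernel `K(x,y) = G(x,y)/G(e,y)` (real-valued; `G` is finite by transience). -/
def martinK [Group Γ] [MeasurableSpace Ω] (P : Measure Ω) (X : ℕ → Ω → Γ) (x y : Γ) : ℝ :=
  (greenFn P X x y).toReal / (greenFn P X 1 y).toReal

/-- Word ball of radius `n` for the generating set `S` : elements expressible as a
product of at most `n` generators. -/
def wordBall [Group Γ] (S : Finset Γ) (n : ℕ) : Set Γ :=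
  {x | ∃ l : List Γ, l.length ≤ n ∧ (∀ g ∈ l, g ∈ (S : Set Γ)) ∧ l.prod = x}

/-!
By the Shannon–McMillan–Breiman hypothesis, for large `m` at least half of the mass of the law
`ν_m` of `Z_m` sits on atoms `x` with `e^{-(h+δ)m} ≤ ν_m{x} ≤ e^{-(h-δ)m}`. There are therefore at
least `e^{(h-δ)m}/2` such atoms, and each lies in the Green ball of radius `(h+δ)m`, since
`ν_m{x} = ℙ[Z_m = x] ≤ F(e,x)`. Hence `V_G((h+δ)m) ≥ e^{(h-δ)m}/2`, a growth rate of at least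
`(h-δ)/(h+δ)`, which tends to `1` as `δ → 0`.
-/

open Real Set Topology

lemma measure_le_encard_mul_of_measure_singleton_le {α : Type*} [MeasurableSpace α] [Countable α]
    (ν : Measure α) {A : Set α} {b : ℝ≥0∞} (hb : ∀ x ∈ A, ν {x} ≤ b) :
    ν A ≤ A.encard * b :=
  calc ν A = ν (⋃ x : A, {(x : α)}) := by rw [iUnion_of_singleton_coe]
    _ ≤ ∑' x : A, ν {(x : α)} := measure_iUnion_le _
    _ ≤ ∑' _ : A, b := ENNReal.tsum_le_tsum fun x => hb x x.2
    _ = A.encard * b := ENNReal.tsum_set_const A b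

lemma eventually_lt_measure_dist_lt_of_tendsto_ae [MeasurableSpace Ω] {P : Measure Ω}
    [IsProbabilityMeasure P] {f : ℕ → Ω → ℝ} {g : Ω → ℝ}
    (hf : ∀ n, AEStronglyMeasurable (f n) P)
    (hfg : ∀ᵐ ω ∂P, Tendsto (fun n => f n ω) atTop (𝓝 (g ω))) {δ : ℝ} (hδ : 0 < δ)
    {r : ℝ≥0∞} (hr : r < 1) :
    ∀ᶠ n in atTop, r < P {ω | dist (f n ω) (g ω) < δ} := by
  have hbad := tendstoInMeasure_iff_dist.1 (tendstoInMeasure_of_tendsto_ae hf hfg) δ hδ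
  filter_upwards [hbad.eventually_lt_const (tsub_pos_of_lt hr)] with n hn
  have hcompl : {ω | dist (f n ω) (g ω) < δ}ᶜ = {ω | δ ≤ dist (f n ω) (g ω)} := by
    ext; simp
  have hsplit := measure_univ_le_add_compl (μ := P) {ω | dist (f n ω) (g ω) < δ}
  rw [measure_univ, hcompl] at hsplit
  by_contra! hle
  have := hsplit.trans_lt (ENNReal.add_lt_add_of_le_of_lt (measure_ne_top _ _) hle hn)
  rw [add_tsub_cancel_of_le hr.le] at this
  exact lt_irrefl _ this

lemma mem_Icc_exp_of_dist_neg_log_div_lt {t n h δ : ℝ} (ht : 0 ≤ t) (hn : 0 < n) (hδh : δ < h)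
    (hd : dist (-log t / n) h < δ) :
    t ∈ Icc (exp (-((h + δ) * n))) (exp (-((h - δ) * n))) := by
  obtain ⟨hlo, hhi⟩ := abs_lt.1 (Real.dist_eq _ _ ▸ hd)
  have ht0 : 0 < t := by
    rcases ht.lt_or_eq with ht0 | rfl
    · exact ht0
    -- `log 0 = 0` would put `0` within `δ` of `h`
    · rw [log_zero, neg_zero, zero_div] at hlo
      linarith
  have hlog_lo : (h - δ) * n < -log t := by
    have := (lt_div_iff₀ hn).1 (by linarith : h - δ < -log t / n); linarith
  have hlog_hi : -log t < (h + δ) * n := by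
    have := (div_lt_iff₀ hn).1 (by linarith : -log t / n < h + δ); linarith
  rw [← exp_log ht0]
  exact ⟨exp_le_exp.2 (by linarith), exp_le_exp.2 (by linarith)⟩

lemma eventually_exp_le_encard_of_tendsto_neg_log_div {α : Type*} [Countable α]
    [MeasurableSpace α] [MeasurableSingletonClass α] [MeasurableSpace Ω] {P : Measure Ω}
    [IsProbabilityMeasure P] {Z : ℕ → Ω → α} (hZ : ∀ n, Measurable (Z n)) {h δ : ℝ}
    (hδ : 0 < δ) (hδh : δ < h)
    (hZh : ∀ᵐ ω ∂P, Tendsto (fun n : ℕ => -log (P.map (Z n) {Z n ω}).toReal / n) atTop (𝓝 h)) :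
    ∀ᶠ n : ℕ in atTop, ENNReal.ofReal (2⁻¹ * exp ((h - δ) * n)) ≤
      {x | exp (-((h + δ) * n)) ≤ (P.map (Z n) {x}).toReal}.encard := by
  set φ : ℕ → α → ℝ := fun n x => -log (P.map (Z n) {x}).toReal / n
  have hφZ : ∀ n, AEStronglyMeasurable (fun ω => φ n (Z n ω)) P := fun n =>
    ((measurable_of_countable (φ n)).comp (hZ n)).aestronglyMeasurable
  filter_upwards [eventually_lt_measure_dist_lt_of_tendsto_ae hφZ hZh hδ
      (by norm_num : (2⁻¹ : ℝ≥0∞) < 1),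
    eventually_gt_atTop 0] with n hn hn0
  set ν := P.map (Z n)
  set A := {x | dist (φ n x) h < δ}
  have hA : ∀ x ∈ A, (ν {x}).toReal ∈ Icc (exp (-((h + δ) * n))) (exp (-((h - δ) * n))) :=
    fun x hx => mem_Icc_exp_of_dist_neg_log_div_lt ENNReal.toReal_nonneg (by positivity) hδh hx
  have hνA : 2⁻¹ ≤ ν A := by
    rw [Measure.map_apply (hZ n) A.to_countable.measurableSet]
    exact hn.le
  have hcount : 2⁻¹ ≤ A.encard * ENNReal.ofReal (exp (-((h - δ) * n))) :=
    hνA.trans <| measure_le_encard_mul_of_measure_singleton_le ν fun x hx =>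
      (ENNReal.le_ofReal_iff_toReal_le (measure_ne_top _ _) (exp_nonneg _)).2 (hA x hx).2
  calc ENNReal.ofReal (2⁻¹ * exp ((h - δ) * n))
      = 2⁻¹ * ENNReal.ofReal (exp ((h - δ) * n)) := by
        rw [ENNReal.ofReal_mul (by norm_num), ENNReal.ofReal_inv_of_pos two_pos,
          ENNReal.ofReal_ofNat]
    _ ≤ A.encard * ENNReal.ofReal (exp (-((h - δ) * n))) * ENNReal.ofReal (exp ((h - δ) * n)) := by
        gcongr
    _ = A.encard := by
        rw [mul_assoc, ← ENNReal.ofReal_mul (exp_nonneg _), ← exp_add, neg_add_cancel, exp_zero,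
          ENNReal.ofReal_one, mul_one]
    _ ≤ _ := ENat.toENNReal_le.2 (encard_mono fun x hx => (hA x hx).1)

lemma frequently_exp_le_of_eventually_exp_le {V : ℝ → ℝ≥0∞} (hV : Monotone V) {a b c C : ℝ}
    (hC : 0 < C) (hb : 0 < b) (hcb : c * b < a)
    (hV_ge : ∀ᶠ m : ℕ in atTop, ENNReal.ofReal (C * exp (a * m)) ≤ V (b * m)) :
    ∃ᶠ n : ℕ in atTop, ENNReal.ofReal (exp (c * n)) ≤ V n := by
  have hceil : Tendsto (fun m : ℕ => ⌈b * m⌉₊) atTop atTop :=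
    tendsto_nat_ceil_atTop.comp (tendsto_natCast_atTop_atTop.const_mul_atTop hb)
  have hgap : ∀ᶠ m : ℕ in atTop, max c 0 - log C ≤ (a - c * b) * m :=
    (tendsto_natCast_atTop_atTop.const_mul_atTop (sub_pos.2 hcb)).eventually_ge_atTop _
  have hceil_le : ∀ᶠ m : ℕ in atTop, ENNReal.ofReal (exp (c * ⌈b * m⌉₊)) ≤ V ⌈b * m⌉₊ := by
    filter_upwards [hV_ge, hgap] with m hm hgap_m
    have hlo : b * m ≤ ⌈b * m⌉₊ := Nat.le_ceil _
    have hhi : (⌈b * m⌉₊ : ℝ) < b * m + 1 := Nat.ceil_lt_add_one (by positivity)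
    have hexp : c * ⌈b * m⌉₊ ≤ log C + a * m := by
      nlinarith [mul_nonneg (sub_nonneg.2 (le_max_left c 0)) (sub_nonneg.2 hlo),
        mul_nonneg (le_max_right c 0) (by linarith : (0 : ℝ) ≤ b * m + 1 - ⌈b * m⌉₊)]
    calc ENNReal.ofReal (exp (c * ⌈b * m⌉₊)) ≤ ENNReal.ofReal (C * exp (a * m)) := by
          rw [← exp_log hC, ← exp_add]
          exact ENNReal.ofReal_le_ofReal (exp_le_exp.2 hexp)
      _ ≤ V (b * m) := hm
      _ ≤ V ⌈b * m⌉₊ := hV hlo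
  exact hceil.frequently hceil_le.frequently

section Walk

variable [Group Γ] [Countable Γ] [MeasurableSpace Γ] [MeasurableSingletonClass Γ]
  [MeasurableSpace Ω] {X : ℕ → Ω → Γ}

lemma measurable_walk (hX : ∀ k, Measurable (X k)) (x : Γ) (n : ℕ) :
    Measurable (walk x X n) := by
  induction n with
  | zero =>
    have h0 : walk x X 0 = fun _ => x := by funext ω; simp [walk]
    exact h0 ▸ measurable_const
  | succ n ih =>
    have hstep : walk x X (n + 1) = fun ω => walk x X n ω * X n ω := by
      funext ω; simp [walk, List.range_succ, mul_assoc]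
    rw [hstep]
    exact (measurable_of_countable fun p : Γ × Γ => p.1 * p.2).comp (ih.prodMk (hX n))

lemma measure_map_walk_singleton_le_hitProb (P : Measure Ω) (hX : ∀ k, Measurable (X k))
    (x y : Γ) (n : ℕ) :
    P.map (walk x X n) {y} ≤ hitProb P X x y := by
  rw [Measure.map_apply (measurable_walk hX x n) (measurableSet_singleton y)]
  exact measure_mono fun ω hω => ⟨n, hω⟩

lemma greenDist_le_of_exp_neg_le_measure_map_walk (P : Measure Ω) [IsFiniteMeasure P]
    (hX : ∀ k, Measurable (X k)) {x y : Γ} {n : ℕ} {r : ℝ}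
    (hr : exp (-r) ≤ (P.map (walk x X n) {y}).toReal) :
    greenDist P X x y ≤ r := by
  have hF : exp (-r) ≤ (hitProb P X x y).toReal :=
    hr.trans (ENNReal.toReal_mono (measure_ne_top _ _)
      (measure_map_walk_singleton_le_hitProb P hX x y n))
  have hlog := log_le_log (exp_pos _) hF
  rw [log_exp] at hlog
  unfold greenDist
  linarith

end Walk

theorem green_volume_growth_ge_one_of_entropy_pos_general
    [Group Γ] [Countable Γ] [MeasurableSpace Γ] [MeasurableSingletonClass Γ]
    [MeasurableSpace Ω] (P : Measure Ω) [IsProbabilityMeasure P]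
    (X : ℕ → Ω → Γ) (hmeas : ∀ k, Measurable (X k))
    (h : ℝ) (hpos : 0 < h)
    (hh : ∀ᵐ ω ∂P, Tendsto (fun n : ℕ =>
        (- Real.log ((Measure.map (walk 1 X n) P) {walk 1 X n ω}).toReal) / n)
      atTop (nhds h)) :
    ∀ ε : ℝ, 0 < ε → ∃ᶠ n : ℕ in atTop,
      ENNReal.ofReal (Real.exp ((1 - ε) * n))
        ≤ {x : Γ | greenDist P X 1 x ≤ (n : ℝ)}.encard := by
  intro ε hε
  obtain ⟨δ, hδ, hδh, hrate⟩ : ∃ δ, 0 < δ ∧ δ < h ∧ (1 - ε) * (h + δ) < h - δ :=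
    ⟨min (ε * h / 4) (h / 2), by positivity, by linarith [min_le_right (ε * h / 4) (h / 2)], by
      nlinarith [min_le_left (ε * h / 4) (h / 2), lt_min (by positivity : 0 < ε * h / 4)
        (by positivity : 0 < h / 2)]⟩
  have hball_mono : Monotone fun r : ℝ => ({x : Γ | greenDist P X 1 x ≤ r}.encard : ℝ≥0∞) :=
    fun r s hrs => ENat.toENNReal_le.2 (encard_mono fun x (hx : _ ≤ r) => hx.trans hrs)
  refine frequently_exp_le_of_eventually_exp_le hball_mono (by norm_num : (0 : ℝ) < 2⁻¹)
    (by linarith) hrate ?_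
  filter_upwards [eventually_exp_le_encard_of_tendsto_neg_log_div (measurable_walk hmeas 1)
    hδ hδh hh] with m hm
  exact hm.trans <| ENat.toENNReal_le.2 <| encard_mono fun x hx =>
    greenDist_le_of_exp_neg_le_measure_map_walk P hmeas hx

/-- if the asymptotic entropy `h` is strictly positive, then the
logarithmic volume growth of Green balls satisfies `v_G ≥ 1`, i.e. for every
`ε > 0`, frequently `V_G(n) ≥ exp((1-ε)n)`. -/
theorem green_volume_growth_ge_one_of_entropy_pos
    [Group Γ] [Countable Γ] [MeasurableSpace Γ] [MeasurableSingletonClass Γ]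
    [MeasurableSpace Ω] (P : Measure Ω) [IsProbabilityMeasure P]
    (μ : Measure Γ) [IsProbabilityMeasure μ]
    (X : ℕ → Ω → Γ) (hmeas : ∀ k, Measurable (X k))
    (hiid : iIndepFun X P)
    (hlaw : ∀ k, Measure.map (X k) P = μ)
    (hgen : Subgroup.closure {g : Γ | μ {g} ≠ 0} = ⊤)
    (htrans : P {ω | ∃ n ≥ 1, walk 1 X n ω = 1} < 1)
    (hent : Summable fun g : Γ => Real.negMulLog (μ {g}).toReal)
    (h : ℝ) (hpos : 0 < h)
    (hh : ∀ᵐ ω ∂P, Tendsto (fun n : ℕ =>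
        (- Real.log ((Measure.map (walk 1 X n) P) {walk 1 X n ω}).toReal) / n)
      atTop (nhds h)) :
    ∀ ε : ℝ, 0 < ε → ∃ᶠ n : ℕ in atTop,
      ENNReal.ofReal (Real.exp ((1 - ε) * n))
        ≤ {x : Γ | greenDist P X 1 x ≤ (n : ℝ)}.encard :=
  green_volume_growth_ge_one_of_entropy_pos_general P X hmeas h hpos hh
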